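/- (Products, symmetric case) Let A, B, S, T be commuting d-tuples of bounded operators with [A,S] = [B,S] = [B,T] = 0 componentwise. If δ^m_{A,B}(X) = 0 and δ^n_{S,T}(X) = 0, then δ^{m+n−1}_{SA, TB}(X) = 0, where δ_{SA,TB}(X) = (Σ_j S_j)(Σ_i A_i)X − X(Σ_i B_i)(Σ_j T_j). -/
import Mathlib


/-- δ_{A,B}(Y) = (Σ_i A_i) Y − Y (Σ_i B_i). -/
noncomputable def deltaOp {E : Type*} [NormedAddCommGroup E] [NormedSpace ℂ E]
    {d : ℕ} (A B : Fin d → (E →L[ℂ] E)) : (E →L[ℂ] E) → (E →L[ℂ] E) :=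
  fun Y => (∑ i, A i) * Y - Y * (∑ i, B i)

theorem stmt18 {E : Type*} [NormedAddCommGroup E] [NormedSpace ℂ E] [CompleteSpace E]
    {d : ℕ} (A B S T : Fin d → (E →L[ℂ] E))
    (hA : ∀ i j, A i * A j = A j * A i) (hB : ∀ i j, B i * B j = B j * B i)
    (hS : ∀ i j, S i * S j = S j * S i) (hT : ∀ i j, T i * T j = T j * T i)
    (hAS : ∀ i j, A i * S j = S j * A i) (hBS : ∀ i j, B i * S j = S j * B i)
    (hBT : ∀ i j, B i * T j = T j * B i)
    (X : E →L[ℂ] E) (m n : ℕ) (hm : 0 < m) (hn : 0 < n)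
    (h1 : (deltaOp A B)^[m] X = 0) (h2 : (deltaOp S T)^[n] X = 0) :
    (fun Y => ((∑ j, S j) * (∑ i, A i)) * Y - Y * ((∑ i, B i) * (∑ j, T j)))^[m + n - 1] X
      = 0 := by
  set a : E →L[ℂ] E := ∑ i, A i with ha
  set b : E →L[ℂ] E := ∑ i, B i with hb
  set s : E →L[ℂ] E := ∑ j, S j with hs
  set t : E →L[ℂ] E := ∑ j, T j with ht
  -- commutation of the sums
  have has : a * s = s * a := by
    rw [ha, hs, Finset.sum_mul_sum, Finset.sum_mul_sum]
    rw [Finset.sum_comm]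
    exact Finset.sum_congr rfl fun i _ => Finset.sum_congr rfl fun j _ => hAS j i
  have hbt : b * t = t * b := by
    rw [hb, ht, Finset.sum_mul_sum, Finset.sum_mul_sum]
    rw [Finset.sum_comm]
    exact Finset.sum_congr rfl fun i _ => Finset.sum_congr rfl fun j _ => hBT j i
  -- helpers for commuting left/right multiplications
  have cLL : ∀ x y : E →L[ℂ] E, x * y = y * x →
      Commute (LinearMap.mulLeft ℂ x) (LinearMap.mulLeft ℂ y) := by
    intro x y h
    show _ = _
    ext Y
    simp only [Module.End.mul_apply, LinearMap.mulLeft_apply, ← mul_assoc, h]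
  have cRR : ∀ x y : E →L[ℂ] E, x * y = y * x →
      Commute (LinearMap.mulRight ℂ x) (LinearMap.mulRight ℂ y) := by
    intro x y h
    show _ = _
    ext Y
    simp only [Module.End.mul_apply, LinearMap.mulRight_apply, mul_assoc, h]
  set D1 : Module.End ℂ (E →L[ℂ] E) :=
    LinearMap.mulLeft ℂ a - LinearMap.mulRight ℂ b with hD1
  set D2 : Module.End ℂ (E →L[ℂ] E) :=
    LinearMap.mulLeft ℂ s - LinearMap.mulRight ℂ t with hD2
  set P : Module.End ℂ (E →L[ℂ] E) := LinearMap.mulLeft ℂ s * D1 with hP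
  set Q : Module.End ℂ (E →L[ℂ] E) := LinearMap.mulRight ℂ b * D2 with hQ
  have cLsD1 : Commute (LinearMap.mulLeft ℂ s) D1 :=
    (cLL s a has.symm).sub_right (LinearMap.commute_mulLeft_right s b)
  have cRbD2 : Commute (LinearMap.mulRight ℂ b) D2 :=
    ((LinearMap.commute_mulLeft_right s b).symm).sub_right (cRR b t hbt)
  have cLsD2 : Commute (LinearMap.mulLeft ℂ s) D2 :=
    (cLL s s rfl).sub_right (LinearMap.commute_mulLeft_right s t)
  have cD1Rb : Commute D1 (LinearMap.mulRight ℂ b) :=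
    (LinearMap.commute_mulLeft_right a b).sub_left (cRR b b rfl)
  have cD1D2 : Commute D1 D2 :=
    ((cLL a s has).sub_right (LinearMap.commute_mulLeft_right a t)).sub_left
      (((LinearMap.commute_mulLeft_right s b).symm).sub_right (cRR b t hbt))
  have cPQ : Commute P Q :=
    (((LinearMap.commute_mulLeft_right s b).mul_right cLsD2).mul_left
      (cD1Rb.mul_right cD1D2))
  -- killing powers
  have hD1fun : ⇑D1 = deltaOp A B := by
    funext Y
    simp [hD1, deltaOp, LinearMap.sub_apply, ← ha, ← hb]
  have hD2fun : ⇑D2 = deltaOp S T := by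
    funext Y
    simp [hD2, deltaOp, LinearMap.sub_apply, ← hs, ← ht]
  have hD1X : (D1 ^ m) X = 0 := by rw [Module.End.pow_apply, hD1fun, h1]
  have hD2X : (D2 ^ n) X = 0 := by rw [Module.End.pow_apply, hD2fun, h2]
  have hPm : (P ^ m) X = 0 := by
    rw [hP, cLsD1.mul_pow, Module.End.mul_apply, hD1X, map_zero]
  have hQn : (Q ^ n) X = 0 := by
    rw [hQ, cRbD2.mul_pow, Module.End.mul_apply, hD2X, map_zero]
  have hPk : ∀ k, m ≤ k → (P ^ k) X = 0 := fun k hk => by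
    rw [← Nat.sub_add_cancel hk, pow_add, Module.End.mul_apply, hPm, map_zero]
  have hQk : ∀ k, n ≤ k → (Q ^ k) X = 0 := fun k hk => by
    rw [← Nat.sub_add_cancel hk, pow_add, Module.End.mul_apply, hQn, map_zero]
  -- the product derivation is P + Q
  have hF : (fun Y : E →L[ℂ] E => (s * a) * Y - Y * (b * t)) = ⇑(P + Q) := by
    funext Y
    simp only [LinearMap.add_apply, hP, hQ, Module.End.mul_apply, hD1, hD2,
      LinearMap.sub_apply, LinearMap.mulLeft_apply, LinearMap.mulRight_apply]
    rw [mul_sub, sub_mul]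
    simp only [hbt, ← mul_assoc]
    abel
  rw [hF, ← Module.End.pow_apply, cPQ.add_pow]
  simp only [LinearMap.sum_apply, Module.End.mul_apply, Module.End.natCast_apply, map_nsmul]
  refine Finset.sum_eq_zero fun k hk => ?_
  rw [Finset.mem_range] at hk
  rcases le_or_gt m k with h | h
  · rw [← Module.End.mul_apply, (cPQ.pow_pow k (m + n - 1 - k)).eq, Module.End.mul_apply,
      hPk k h, map_zero, smul_zero]
  · rw [hQk (m + n - 1 - k) (by omega), map_zero, smul_zero]
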